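/- arXiv:1805.01462 — 2 statements merged into one kernel-verified Lean document; each statement's English description precedes it below -/
import Mathlib

section
/- Let 0 < x < 1, s > 0, and let α > z*, where z* ≈ 1.461632144 is the abscissa of the minimum of the gamma function on (0, ∞) (equivalently, Γ is strictly increasing on [z*, ∞)). Then the function β ↦ G*_β(x, α, s) is log-concave on (-1, ∞): for all β₁, β₂ > -1 and λ ∈ [0, 1], G*_{λβ₁+(1-λ)β₂}(x, α, s) ≥ G*_{β₁}(x, α, s)^λ · G*_{β₂}(x, α, s)^(1-λ). -/
/-!
Write `J_γ(c) = ∫₀^c t^γ h(t) dt` with `h(t) = x^(t+α) / Γ(t+α+1)`, so that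
`G*_β(x, α, s) = J_β(s) / J_β(∞)` (the factors `Γ(β+1)` cancel). Since `log Γ` is convex and `Γ`
increases beyond `z*`, `v ↦ log h(e^v)` is concave, which makes `c ↦ c^(γ+1) h(c) / J_γ(c)`
decrease. Comparing `J_m` with a power law `J_m(c) (t/c)^κ` that crosses it only once then shows
that `γ ↦ c^γ / J_γ(c)` is convex for each `c`. This is exactly the statement that
`c ↦ λ log J_{β₁}(c) + (1-λ) log J_{β₂}(c) - log J_{λβ₁+(1-λ)β₂}(c)` has nonnegative derivative,
so its value at `c = s` is at most its limit as `c → ∞`.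
-/

open MeasureTheory Real Set

/-- The Volterra function `μ(x, β, α) = ∫₀^∞ x^(t+α) t^β / (Γ(t+α+1) Γ(β+1)) dt`. -/
noncomputable def volterraMu (x β α : ℝ) : ℝ :=
  ∫ t in Set.Ioi (0 : ℝ),
    x ^ (t + α) * t ^ β / (Real.Gamma (t + α + 1) * Real.Gamma (β + 1))

/-- The incomplete Volterra function
`μ(x, β, α, s) = ∫_s^∞ x^(t+α) t^β / (Γ(t+α+1) Γ(β+1)) dt`. -/
noncomputable def volterraMuInc (x β α s : ℝ) : ℝ :=
  ∫ t in Set.Ioi s,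
    x ^ (t + α) * t ^ β / (Real.Gamma (t + α + 1) * Real.Gamma (β + 1))

/-- The incomplete Volterra function from below
`μ*(x, β, α, s) = ∫₀^s x^(t+α) t^β / (Γ(t+α+1) Γ(β+1)) dt`. -/
noncomputable def volterraMuIncStar (x β α s : ℝ) : ℝ :=
  ∫ t in Set.Ioc (0 : ℝ) s,
    x ^ (t + α) * t ^ β / (Real.Gamma (t + α + 1) * Real.Gamma (β + 1))

/-- The normalized incomplete Volterra function `G_β(x, α, s) = μ(x,β,α,s)/μ(x,β,α)`. -/
noncomputable def volterraG (β x α s : ℝ) : ℝ :=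
  volterraMuInc x β α s / volterraMu x β α

/-- The normalized incomplete Volterra function from below
`G*_β(x, α, s) = μ*(x,β,α,s)/μ(x,β,α)`. -/
noncomputable def volterraGStar (β x α s : ℝ) : ℝ :=
  volterraMuIncStar x β α s / volterraMu x β α

open Filter Topology

theorem ConvexOn.add_le_add_sub {s : Set ℝ} {f : ℝ → ℝ} (hf : ConvexOn ℝ s f) {p q r : ℝ}
    (hp : p ∈ s) (hm : q + r - p ∈ s) (hpq : p ≤ q) (hpr : p ≤ r) :
    f q + f r ≤ f p + f (q + r - p) := by
  generalize hm_def : q + r - p = m at hm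
  obtain rfl : r = m + p - q := by linarith
  obtain hpm | hpm := (show p ≤ m by linarith).eq_or_lt
  · obtain rfl : q = p := by linarith
    simp
  have hmp : 0 < m - p := sub_pos.2 hpm
  set a := (m - q) / (m - p)
  set b := (q - p) / (m - p)
  have ha : 0 ≤ a := div_nonneg (by linarith) hmp.le
  have hb : 0 ≤ b := div_nonneg (by linarith) hmp.le
  have hab : a + b = 1 := by simp only [a, b]; field_simp; ring
  have hq := hf.2 hp hm ha hb hab
  have hr := hf.2 hp hm hb ha ((add_comm _ _).trans hab)
  rw [show a • p + b • m = q by simp only [smul_eq_mul, a, b]; field_simp; ring] at hq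
  rw [show b • p + a • m = m + p - q by simp only [smul_eq_mul, a, b]; field_simp; ring] at hr
  simp only [smul_eq_mul] at hq hr
  linear_combination hq + hr + (f p + f m) * hab

theorem ConvexOn.monotoneOn_of_isMinOn {s : Set ℝ} {f : ℝ → ℝ} (hf : ConvexOn ℝ s f) {z : ℝ}
    (hz : z ∈ s) (hmin : IsMinOn f s z) : MonotoneOn f (s ∩ Ici z) := by
  rintro u ⟨hu, hzu⟩ v ⟨hv, -⟩ huv
  obtain rfl | hzu := (mem_Ici.1 hzu).eq_or_lt
  · exact hmin hv
  obtain rfl | huv := huv.eq_or_lt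
  · exact le_rfl
  have hslope := hf.secant_mono hu hz hv hzu.ne huv.ne' (hzu.trans huv).le
  have h0 : 0 ≤ (f z - f u) / (z - u) :=
    div_nonneg_of_nonpos (sub_nonpos.2 (hmin hu)) (sub_nonpos.2 hzu.le)
  linarith [(le_div_iff₀ (sub_pos.2 huv)).1 (h0.trans hslope)]

theorem min_le_of_hasDerivAt_of_antitoneOn {f p g : ℝ → ℝ} {a b c : ℝ} (hab : a ≤ b) (hbc : b ≤ c)
    (hf : ∀ u ∈ Icc a c, HasDerivAt f (p u * g u) u) (hp : ∀ u ∈ Icc a c, 0 ≤ p u)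
    (hg : AntitoneOn g (Icc a c)) : min (f a) (f c) ≤ f b := by
  have hcont : ∀ {s}, s ⊆ Icc a c → ContinuousOn f s :=
    fun hs u hu ↦ (hf u (hs hu)).continuousAt.continuousWithinAt
  have hderiv : ∀ {s}, s ⊆ Icc a c →
      ∀ u ∈ interior s, HasDerivWithinAt f (p u * g u) (interior s) u :=
    fun hs u hu ↦ (hf u (hs (interior_subset hu))).hasDerivWithinAt
  by_cases hgb : 0 ≤ g b
  · have hsub : Icc a b ⊆ Icc a c := Icc_subset_Icc_right hbc
    refine (min_le_left _ _).trans <| monotoneOn_of_hasDerivWithinAt_nonneg (convex_Icc a b)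
      (hcont hsub) (hderiv hsub) (fun u hu ↦ ?_) (left_mem_Icc.2 hab) (right_mem_Icc.2 hab) hab
    rw [interior_Icc] at hu
    exact mul_nonneg (hp u (hsub (Ioo_subset_Icc_self hu))) <| hgb.trans <|
      hg (hsub (Ioo_subset_Icc_self hu)) ⟨hab, hbc⟩ hu.2.le
  · have hsub : Icc b c ⊆ Icc a c := Icc_subset_Icc_left hab
    refine (min_le_right _ _).trans <| antitoneOn_of_hasDerivWithinAt_nonpos (convex_Icc b c)
      (hcont hsub) (hderiv hsub) (fun u hu ↦ ?_) (left_mem_Icc.2 hbc) (right_mem_Icc.2 hbc) hbc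
    rw [interior_Icc] at hu
    exact mul_nonpos_of_nonneg_of_nonpos (hp u (hsub (Ioo_subset_Icc_self hu))) <|
      (hg ⟨hab, hbc⟩ (hsub (Ioo_subset_Icc_self hu)) hu.1.le).trans (not_le.1 hgb).le

theorem setIntegral_mul_nonneg_of_sign_change {f g : ℝ → ℝ} {a b : ℝ} (hab : a < b)
    (hfb : 0 ≤ f b) (hup : ∀ u ∈ Ioc a b, ∀ v ∈ Ioc a b, u ≤ v → 0 ≤ f u → 0 ≤ f v)
    (hg : MonotoneOn g (Icc a b)) (hf : IntegrableOn f (Ioc a b))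
    (hgf : IntegrableOn (fun t ↦ g t * f t) (Ioc a b)) (h0 : ∫ t in Ioc a b, f t = 0) :
    0 ≤ ∫ t in Ioc a b, g t * f t := by
  set T := {u ∈ Ioc a b | 0 ≤ f u}
  have hbT : b ∈ T := ⟨right_mem_Ioc.2 hab, hfb⟩
  have hTbdd : BddBelow T := ⟨a, fun u hu ↦ hu.1.1.le⟩
  set t₀ := sInf T
  have ht₀ : t₀ ∈ Icc a b := ⟨le_csInf ⟨b, hbT⟩ fun u hu ↦ hu.1.1.le, csInf_le hTbdd hbT⟩
  have hsign : ∀ t ∈ Ioc a b, 0 ≤ (g t - g t₀) * f t := by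
    intro t ht
    rcases lt_or_ge t t₀ with hlt | hge
    · have hft : f t < 0 := not_le.1 fun hft ↦ (csInf_le hTbdd ⟨ht, hft⟩).not_gt hlt
      exact mul_nonneg_of_nonpos_of_nonpos
        (sub_nonpos.2 (hg (Ioc_subset_Icc_self ht) ht₀ hlt.le)) hft.le
    rcases hge.eq_or_lt with heq | hgt
    · simp [heq]
    obtain ⟨u, huT, hut⟩ := exists_lt_of_csInf_lt ⟨b, hbT⟩ hgt
    exact mul_nonneg (sub_nonneg.2 (hg ht₀ (Ioc_subset_Icc_self ht) hge))
      (hup u huT.1 t ht hut.le huT.2)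
  calc 0 ≤ ∫ t in Ioc a b, (g t - g t₀) * f t := setIntegral_nonneg measurableSet_Ioc hsign
    _ = ∫ t in Ioc a b, g t * f t := by
      simp_rw [sub_mul]
      rw [integral_sub hgf (hf.const_mul _), integral_const_mul, h0, mul_zero, sub_zero]

theorem integrableOn_Ioc_rpow {γ : ℝ} (hγ : -1 < γ) (c : ℝ) :
    IntegrableOn (fun t : ℝ ↦ t ^ γ) (Ioc 0 c) :=
  (intervalIntegral.intervalIntegrable_rpow' (a := 0) (b := c) hγ).1

theorem rpow_sub_one_mul_div_rpow {c d κ t : ℝ} (hc : 0 < c) (ht : 0 < t) :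
    t ^ (d - 1) * (t / c) ^ κ = c ^ (-κ) * t ^ (d + κ - 1) := by
  rw [div_rpow ht.le hc.le, rpow_neg hc.le, show d + κ - 1 = d - 1 + κ by ring, rpow_add ht]
  ring

theorem integrableOn_Ioc_rpow_sub_one_mul_div_rpow {c d κ : ℝ} (hc : 0 < c) (hdκ : 0 < d + κ) :
    IntegrableOn (fun t ↦ t ^ (d - 1) * (t / c) ^ κ) (Ioc 0 c) :=
  IntegrableOn.congr_fun
    ((integrableOn_Ioc_rpow (γ := d + κ - 1) (by linarith) c).const_mul (c ^ (-κ)))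
    (fun _ ht ↦ (rpow_sub_one_mul_div_rpow hc ht.1).symm) measurableSet_Ioc

theorem integral_Ioc_rpow_sub_one_mul_div_rpow {c d κ : ℝ} (hc : 0 < c) (hdκ : 0 < d + κ) :
    ∫ t in Ioc 0 c, t ^ (d - 1) * (t / c) ^ κ = c ^ d / (d + κ) := by
  rw [setIntegral_congr_fun measurableSet_Ioc fun _ ht ↦ rpow_sub_one_mul_div_rpow hc ht.1,
    integral_const_mul, ← intervalIntegral.integral_of_le hc.le,
    integral_rpow (Or.inl (by linarith)), show d + κ - 1 + 1 = d + κ by ring, zero_rpow hdκ.ne',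
    sub_zero, mul_div_assoc', ← rpow_add hc, show -κ + (d + κ) = d by ring]

theorem rpow_mul_rpow_le_of_log_le {a b c l : ℝ} (ha : 0 < a) (hb : 0 < b) (hc : 0 < c)
    (h : l * log a + (1 - l) * log b ≤ log c) : a ^ l * b ^ (1 - l) ≤ c := by
  rw [rpow_def_of_pos ha, rpow_def_of_pos hb, ← exp_add, ← exp_log hc, mul_comm (log a),
    mul_comm (log b)]
  exact exp_le_exp.2 h

/-- The last field says that `h (u * r) / h r` is nondecreasing in `r` for fixed `u ≤ 1`,
i.e. `log ∘ h ∘ exp` is concave. -/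
structure IsScaleLogConcaveKernel (h : ℝ → ℝ) : Prop where
  pos : ∀ ⦃t⦄, 0 < t → 0 < h t
  continuousOn : ContinuousOn h (Ioi 0)
  bddAbove : BddAbove (h '' Ioi 0)
  integrableOn : ∀ ⦃γ : ℝ⦄, -1 < γ → IntegrableOn (fun t ↦ t ^ γ * h t) (Ioi 0)
  mul_le_mul_scale : ∀ ⦃u r r'⦄, 0 < u → u ≤ 1 → 0 < r → r ≤ r' →
    h (u * r) * h r' ≤ h (u * r') * h r

noncomputable def lowerMoment (h : ℝ → ℝ) (γ c : ℝ) : ℝ := ∫ t in Ioc 0 c, t ^ γ * h t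

noncomputable def moment (h : ℝ → ℝ) (γ : ℝ) : ℝ := ∫ t in Ioi 0, t ^ γ * h t

noncomputable def modelDefect (h : ℝ → ℝ) (γ κ c d : ℝ) : ℝ :=
  ∫ t in Ioc 0 c, t ^ (d - 1) * (lowerMoment h γ t - lowerMoment h γ c * (t / c) ^ κ)

theorem lowerMoment_eq_rpow_mul (h : ℝ → ℝ) (γ : ℝ) {c : ℝ} (hc : 0 < c) :
    lowerMoment h γ c = c ^ (γ + 1) * ∫ u in Ioc 0 1, u ^ γ * h (u * c) := by
  have hscale := intervalIntegral.integral_comp_mul_right (fun t ↦ t ^ γ * h t) hc.ne'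
    (a := 0) (b := 1)
  simp only [zero_mul, one_mul, smul_eq_mul] at hscale
  rw [lowerMoment, ← intervalIntegral.integral_of_le hc.le,
    ← intervalIntegral.integral_of_le zero_le_one]
  have hcongr : ∀ u ∈ uIcc (0 : ℝ) 1, (u * c) ^ γ * h (u * c) = c ^ γ * (u ^ γ * h (u * c)) := by
    intro u hu
    rw [uIcc_of_le zero_le_one] at hu
    rw [mul_rpow hu.1 hc.le]
    ring
  rw [intervalIntegral.integral_congr hcongr, intervalIntegral.integral_const_mul] at hscale
  rw [rpow_add_one hc.ne', mul_comm (c ^ γ) c, mul_assoc, hscale]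
  field_simp

namespace IsScaleLogConcaveKernel

variable {h : ℝ → ℝ}

theorem rpow_mul_pos (hh : IsScaleLogConcaveKernel h) {γ t : ℝ} (ht : 0 < t) :
    0 < t ^ γ * h t :=
  mul_pos (rpow_pos_of_pos ht γ) (hh.pos ht)

theorem exists_le (hh : IsScaleLogConcaveKernel h) : ∃ B, ∀ ⦃t⦄, 0 < t → h t ≤ B :=
  let ⟨B, hB⟩ := hh.bddAbove
  ⟨B, fun _ ht ↦ hB (mem_image_of_mem h ht)⟩

theorem continuousOn_rpow_mul (hh : IsScaleLogConcaveKernel h) (γ : ℝ) :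
    ContinuousOn (fun t ↦ t ^ γ * h t) (Ioi 0) := fun t ht ↦
  (continuousAt_rpow_const t γ (Or.inl (ne_of_gt ht))).continuousWithinAt.mul
    (hh.continuousOn t ht)

theorem integrableOn_Ioc (hh : IsScaleLogConcaveKernel h) {γ : ℝ} (hγ : -1 < γ) (c : ℝ) :
    IntegrableOn (fun t ↦ t ^ γ * h t) (Ioc 0 c) :=
  (hh.integrableOn hγ).mono_set Ioc_subset_Ioi_self

theorem lowerMoment_nonneg (hh : IsScaleLogConcaveKernel h) (γ c : ℝ) : 0 ≤ lowerMoment h γ c :=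
  setIntegral_nonneg measurableSet_Ioc fun _ ht ↦ (hh.rpow_mul_pos ht.1).le

theorem lowerMoment_pos (hh : IsScaleLogConcaveKernel h) {γ c : ℝ} (hγ : -1 < γ) (hc : 0 < c) :
    0 < lowerMoment h γ c := by
  rw [lowerMoment, ← intervalIntegral.integral_of_le hc.le]
  exact intervalIntegral.intervalIntegral_pos_of_pos_on
    ((intervalIntegrable_iff_integrableOn_Ioc_of_le hc.le).2 (hh.integrableOn_Ioc hγ c))
    (fun t ht ↦ hh.rpow_mul_pos ht.1) hc

theorem lowerMoment_le_moment (hh : IsScaleLogConcaveKernel h) {γ : ℝ} (hγ : -1 < γ) (c : ℝ) :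
    lowerMoment h γ c ≤ moment h γ :=
  setIntegral_mono_set (hh.integrableOn hγ)
    ((ae_restrict_iff' measurableSet_Ioi).2 (ae_of_all _ fun _ ht ↦ (hh.rpow_mul_pos ht).le))
    Ioc_subset_Ioi_self.eventuallyLE

theorem moment_pos (hh : IsScaleLogConcaveKernel h) {γ : ℝ} (hγ : -1 < γ) : 0 < moment h γ :=
  (hh.lowerMoment_pos hγ one_pos).trans_le (hh.lowerMoment_le_moment hγ 1)

theorem lowerMoment_div_moment_pos (hh : IsScaleLogConcaveKernel h) {γ c : ℝ} (hγ : -1 < γ)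
    (hc : 0 < c) : 0 < lowerMoment h γ c / moment h γ :=
  div_pos (hh.lowerMoment_pos hγ hc) (hh.moment_pos hγ)

theorem hasDerivAt_lowerMoment (hh : IsScaleLogConcaveKernel h) {γ c : ℝ} (hγ : -1 < γ)
    (hc : 0 < c) : HasDerivAt (lowerMoment h γ) (c ^ γ * h c) c := by
  have hftc := intervalIntegral.integral_hasDerivAt_right
    ((intervalIntegrable_iff_integrableOn_Ioc_of_le hc.le).2 (hh.integrableOn_Ioc hγ c))
    ((hh.continuousOn_rpow_mul γ).stronglyMeasurableAtFilter isOpen_Ioi c hc)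
    ((hh.continuousOn_rpow_mul γ).continuousAt (Ioi_mem_nhds hc))
  refine hftc.congr_of_eventuallyEq (eventuallyEq_of_mem (Ioi_mem_nhds hc) fun u hu ↦ ?_)
  exact (intervalIntegral.integral_of_le (le_of_lt hu)).symm

theorem tendsto_lowerMoment_atTop (hh : IsScaleLogConcaveKernel h) {γ : ℝ} (hγ : -1 < γ) :
    Tendsto (lowerMoment h γ) atTop (𝓝 (moment h γ)) :=
  (intervalIntegral_tendsto_integral_Ioi 0 (hh.integrableOn hγ) tendsto_id).congr'
    (eventually_ge_atTop 0 |>.mono fun _ hc ↦ intervalIntegral.integral_of_le hc)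

theorem exists_lowerMoment_le (hh : IsScaleLogConcaveKernel h) {γ : ℝ} (hγ : -1 < γ) :
    ∃ C, ∀ ⦃c⦄, 0 < c → lowerMoment h γ c ≤ C * c ^ (γ + 1) := by
  obtain ⟨B, hB⟩ := hh.exists_le
  refine ⟨B / (γ + 1), fun c hc ↦ ?_⟩
  calc lowerMoment h γ c ≤ ∫ t in Ioc 0 c, B * t ^ γ :=
        setIntegral_mono_on (hh.integrableOn_Ioc hγ c) ((integrableOn_Ioc_rpow hγ c).const_mul B)
          measurableSet_Ioc fun t ht ↦ by
            rw [mul_comm B]; exact mul_le_mul_of_nonneg_left (hB ht.1) (rpow_nonneg ht.1.le γ)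
    _ = B / (γ + 1) * c ^ (γ + 1) := by
      rw [← intervalIntegral.integral_of_le hc.le, intervalIntegral.integral_const_mul,
        integral_rpow (Or.inl hγ), zero_rpow (by linarith)]
      ring

theorem integrableOn_rpow_mul_lowerMoment (hh : IsScaleLogConcaveKernel h) {γ d : ℝ}
    (hγ : -1 < γ) (hγd : -1 < γ + d) (c : ℝ) :
    IntegrableOn (fun t ↦ t ^ (d - 1) * lowerMoment h γ t) (Ioc 0 c) := by
  obtain ⟨C, hC⟩ := hh.exists_lowerMoment_le hγ
  have hcont : ContinuousOn (fun t ↦ t ^ (d - 1) * lowerMoment h γ t) (Ioc 0 c) := fun t ht ↦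
    ((continuousAt_rpow_const t _ (Or.inl ht.1.ne')).mul
      (hh.hasDerivAt_lowerMoment hγ ht.1).continuousAt).continuousWithinAt
  refine Integrable.mono' ((integrableOn_Ioc_rpow hγd c).const_mul C)
    (hcont.aestronglyMeasurable measurableSet_Ioc)
    ((ae_restrict_iff' measurableSet_Ioc).2 (ae_of_all _ fun t ht ↦ ?_))
  rw [norm_of_nonneg (mul_nonneg (rpow_nonneg ht.1.le _) (hh.lowerMoment_nonneg γ t))]
  calc t ^ (d - 1) * lowerMoment h γ t ≤ t ^ (d - 1) * (C * t ^ (γ + 1)) :=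
        mul_le_mul_of_nonneg_left (hC ht.1) (rpow_nonneg ht.1.le _)
    _ = C * t ^ (γ + d) := by
      rw [mul_left_comm, ← rpow_add ht.1, show d - 1 + (γ + 1) = γ + d by ring]

theorem tendsto_rpow_mul_lowerMoment_zero (hh : IsScaleLogConcaveKernel h) {γ d : ℝ}
    (hγ : -1 < γ) (hγd : -1 < γ + d) :
    Tendsto (fun t ↦ t ^ d * lowerMoment h γ t) (𝓝[>] 0) (𝓝 0) := by
  obtain ⟨C, hC⟩ := hh.exists_lowerMoment_le hγ
  have hpow : Tendsto (fun t : ℝ ↦ C * t ^ (γ + d + 1)) (𝓝[>] 0) (𝓝 0) := by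
    have : Tendsto (fun t : ℝ ↦ C * t ^ (γ + d + 1)) (𝓝[>] 0) (𝓝 (C * 0 ^ (γ + d + 1))) :=
      ((continuousAt_rpow_const 0 (γ + d + 1) (Or.inr (by linarith))).tendsto.mono_left
        nhdsWithin_le_nhds).const_mul C
    rwa [zero_rpow (by linarith), mul_zero] at this
  refine squeeze_zero' ?_ ?_ hpow
  · filter_upwards [self_mem_nhdsWithin] with t ht
    exact mul_nonneg (rpow_nonneg (le_of_lt ht) _) (hh.lowerMoment_nonneg γ t)
  · filter_upwards [self_mem_nhdsWithin] with t (ht : 0 < t)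
    calc t ^ d * lowerMoment h γ t ≤ t ^ d * (C * t ^ (γ + 1)) :=
          mul_le_mul_of_nonneg_left (hC ht) (rpow_nonneg ht.le _)
      _ = C * t ^ (γ + d + 1) := by
        rw [mul_left_comm, ← rpow_add ht, show d + (γ + 1) = γ + d + 1 by ring]

theorem lowerMoment_add (hh : IsScaleLogConcaveKernel h) {γ d c : ℝ} (hγ : -1 < γ)
    (hγd : -1 < γ + d) (hc : 0 < c) :
    lowerMoment h (γ + d) c =
      c ^ d * lowerMoment h γ c - d * ∫ t in Ioc 0 c, t ^ (d - 1) * lowerMoment h γ t := by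
  have hderiv : ∀ t, 0 < t → HasDerivAt (fun t ↦ t ^ d * lowerMoment h γ t)
      (d * (t ^ (d - 1) * lowerMoment h γ t) + t ^ (γ + d) * h t) t := by
    intro t ht
    refine ((hasDerivAt_rpow_const (p := d) (Or.inl ht.ne')).mul
      (hh.hasDerivAt_lowerMoment hγ ht)).congr_deriv ?_
    rw [rpow_add ht]
    ring
  have hint := ((hh.integrableOn_rpow_mul_lowerMoment hγ hγd c).const_mul d).add
    (hh.integrableOn_Ioc hγd c)
  have hftc := intervalIntegral.integral_eq_sub_of_hasDerivAt_of_tendsto hc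
    (fun t ht ↦ hderiv t ht.1)
    ((intervalIntegrable_iff_integrableOn_Ioc_of_le hc.le).2 hint)
    (hh.tendsto_rpow_mul_lowerMoment_zero hγ hγd)
    ((hderiv c hc).continuousAt.tendsto.mono_left nhdsWithin_le_nhds)
  rw [intervalIntegral.integral_of_le hc.le,
    integral_add ((hh.integrableOn_rpow_mul_lowerMoment hγ hγd c).const_mul d)
      (hh.integrableOn_Ioc hγd c), integral_const_mul, sub_zero] at hftc
  rw [lowerMoment]
  linarith

theorem lowerMoment_lt_rpow_mul (hh : IsScaleLogConcaveKernel h) {γ d c : ℝ}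
    (hγ : -1 < γ) (hγd : -1 < γ + d) (hd : d < 0) (hc : 0 < c) :
    lowerMoment h γ c < c ^ (-d) * lowerMoment h (γ + d) c := by
  have hpos : 0 < ∫ t in (0 : ℝ)..c, c ^ (-d) * (t ^ (γ + d) * h t) - t ^ γ * h t := by
    refine intervalIntegral.intervalIntegral_pos_of_pos_on
      ((intervalIntegrable_iff_integrableOn_Ioc_of_le hc.le).2
        (((hh.integrableOn_Ioc hγd c).const_mul _).sub (hh.integrableOn_Ioc hγ c)))
      (fun t ht ↦ ?_) hc
    have hlt : 1 < c ^ (-d) * t ^ d := by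
      rw [rpow_neg hc.le, ← div_eq_inv_mul, ← div_rpow ht.1.le hc.le]
      exact one_lt_rpow_of_pos_of_lt_one_of_neg (div_pos ht.1 hc) ((div_lt_one hc).2 ht.2) hd
    have hkey : c ^ (-d) * (t ^ (γ + d) * h t) - t ^ γ * h t =
        (c ^ (-d) * t ^ d - 1) * (t ^ γ * h t) := by
      rw [rpow_add ht.1]; ring
    rw [hkey]
    exact mul_pos (by linarith) (hh.rpow_mul_pos ht.1)
  rw [intervalIntegral.integral_of_le hc.le, integral_sub ((hh.integrableOn_Ioc hγd c).const_mul _)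
    (hh.integrableOn_Ioc hγ c), integral_const_mul] at hpos
  rw [lowerMoment, lowerMoment]
  linarith

theorem antitoneOn_rpow_mul_div_lowerMoment (hh : IsScaleLogConcaveKernel h) {γ : ℝ}
    (hγ : -1 < γ) : AntitoneOn (fun c ↦ c ^ (γ + 1) * h c / lowerMoment h γ c) (Ioi 0) := by
  obtain ⟨B, hB⟩ := hh.exists_le
  set I : ℝ → ℝ := fun c ↦ ∫ u in Ioc 0 1, u ^ γ * h (u * c)
  have hIint : ∀ {c}, 0 < c → IntegrableOn (fun u ↦ u ^ γ * h (u * c)) (Ioc 0 1) := by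
    intro c hc
    have hcont : ContinuousOn (fun u ↦ u ^ γ * h (u * c)) (Ioc 0 1) := fun u hu ↦
      ((continuousAt_rpow_const u γ (Or.inl hu.1.ne')).mul
        (ContinuousAt.comp (f := fun u ↦ u * c) (hh.continuousOn.continuousAt
          (Ioi_mem_nhds (mul_pos hu.1 hc))) (by fun_prop))).continuousWithinAt
    refine Integrable.mono' ((integrableOn_Ioc_rpow hγ 1).const_mul B)
      (hcont.aestronglyMeasurable measurableSet_Ioc)
      ((ae_restrict_iff' measurableSet_Ioc).2 (ae_of_all _ fun u hu ↦ ?_))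
    rw [norm_of_nonneg (mul_nonneg (rpow_nonneg hu.1.le _) (hh.pos (mul_pos hu.1 hc)).le),
      mul_comm B]
    exact mul_le_mul_of_nonneg_left (hB (mul_pos hu.1 hc)) (rpow_nonneg hu.1.le _)
  have hIpos : ∀ {c}, 0 < c → 0 < I c := fun hc ↦ pos_of_mul_pos_right
    ((lowerMoment_eq_rpow_mul h γ hc).symm ▸ hh.lowerMoment_pos hγ hc) (rpow_pos_of_pos hc _).le
  intro c (hc : 0 < c) c' (hc' : 0 < c') hcc'
  dsimp only
  rw [lowerMoment_eq_rpow_mul h γ hc, lowerMoment_eq_rpow_mul h γ hc',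
    mul_div_mul_left _ _ (rpow_pos_of_pos hc _).ne',
    mul_div_mul_left _ _ (rpow_pos_of_pos hc' _).ne',
    div_le_div_iff₀ (hIpos hc') (hIpos hc), ← integral_const_mul, ← integral_const_mul]
  refine setIntegral_mono_on ((hIint hc).const_mul _) ((hIint hc').const_mul _)
    measurableSet_Ioc fun u hu ↦ ?_
  have := hh.mul_le_mul_scale hu.1 hu.2 hc hcc'
  have hu0 := rpow_nonneg hu.1.le γ
  nlinarith

theorem mul_div_rpow_le_lowerMoment_of_le (hh : IsScaleLogConcaveKernel h) {γ κ c u v : ℝ}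
    (hγ : -1 < γ) (hu : 0 < u) (huv : u ≤ v) (hvc : v ≤ c)
    (huc : lowerMoment h γ c * (u / c) ^ κ ≤ lowerMoment h γ u) :
    lowerMoment h γ c * (v / c) ^ κ ≤ lowerMoment h γ v := by
  set f : ℝ → ℝ := fun t ↦ log (lowerMoment h γ t) - κ * log t
  have hc : 0 < c := hu.trans_le (huv.trans hvc)
  have hiff : ∀ t, 0 < t → (lowerMoment h γ c * (t / c) ^ κ ≤ lowerMoment h γ t ↔ f c ≤ f t) := by
    intro t ht
    have hpow := rpow_pos_of_pos (div_pos ht hc) κ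
    rw [← log_le_log_iff (mul_pos (hh.lowerMoment_pos hγ hc) hpow) (hh.lowerMoment_pos hγ ht),
      log_mul (hh.lowerMoment_pos hγ hc).ne' hpow.ne', log_rpow (div_pos ht hc),
      log_div ht.ne' hc.ne']
    constructor <;> intro h' <;> simp only [f] at * <;> linarith
  rw [hiff v (hu.trans_le huv)]
  refine (le_min ((hiff u hu).1 huc) le_rfl).trans <| min_le_of_hasDerivAt_of_antitoneOn
    (p := fun t ↦ t⁻¹) (g := fun t ↦ t ^ (γ + 1) * h t / lowerMoment h γ t - κ) huv hvc
    (fun t ht ↦ ?_) (fun t ht ↦ inv_nonneg.2 (hu.trans_le ht.1).le)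
    (fun s hs t ht hst ↦ sub_le_sub_right (hh.antitoneOn_rpow_mul_div_lowerMoment hγ
      (hu.trans_le hs.1) (hu.trans_le ht.1) hst) κ)
  have ht0 : 0 < t := hu.trans_le ht.1
  refine (((hh.hasDerivAt_lowerMoment hγ ht0).log (hh.lowerMoment_pos hγ ht0).ne').sub
    ((hasDerivAt_log ht0.ne').const_mul κ)).congr_deriv ?_
  rw [rpow_add_one ht0.ne']
  field_simp

theorem integrableOn_modelDefect_integrand (hh : IsScaleLogConcaveKernel h) {γ κ c d : ℝ}
    (hγ : -1 < γ) (hγd : -1 < γ + d) (hdκ : 0 < d + κ) (hc : 0 < c) :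
    IntegrableOn (fun t ↦ t ^ (d - 1) * (lowerMoment h γ t - lowerMoment h γ c * (t / c) ^ κ))
      (Ioc 0 c) :=
  ((hh.integrableOn_rpow_mul_lowerMoment hγ hγd c).sub
    ((integrableOn_Ioc_rpow_sub_one_mul_div_rpow hc hdκ).const_mul (lowerMoment h γ c))).congr_fun
    (fun _ _ ↦ by simp only [Pi.sub_apply]; ring) measurableSet_Ioc

theorem lowerMoment_add_eq_sub_modelDefect (hh : IsScaleLogConcaveKernel h) {γ κ c d : ℝ}
    (hγ : -1 < γ) (hγd : -1 < γ + d) (hdκ : 0 < d + κ) (hc : 0 < c) :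
    lowerMoment h (γ + d) c =
      c ^ d * lowerMoment h γ c * κ / (d + κ) - d * modelDefect h γ κ c d := by
  have hD : modelDefect h γ κ c d = (∫ t in Ioc 0 c, t ^ (d - 1) * lowerMoment h γ t) -
      lowerMoment h γ c * (c ^ d / (d + κ)) := by
    rw [modelDefect, ← integral_Ioc_rpow_sub_one_mul_div_rpow hc hdκ, ← integral_const_mul,
      ← integral_sub (hh.integrableOn_rpow_mul_lowerMoment hγ hγd c)
        ((integrableOn_Ioc_rpow_sub_one_mul_div_rpow hc hdκ).const_mul _)]
    exact setIntegral_congr_fun measurableSet_Ioc fun t _ ↦ by ring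
  rw [hh.lowerMoment_add hγ hγd hc, hD]
  field_simp
  ring

theorem exists_model_exponent (hh : IsScaleLogConcaveKernel h) {γ d c : ℝ} (hγ : -1 < γ)
    (hγd : -1 < γ + d) (hd : d < 0) (hc : 0 < c) :
    ∃ κ, 0 < κ ∧ 0 < d + κ ∧
      lowerMoment h (γ + d) c * (d + κ) = c ^ d * lowerMoment h γ c * κ := by
  set P := lowerMoment h (γ + d) c
  set W := c ^ d * lowerMoment h γ c
  have hW : 0 < W := mul_pos (rpow_pos_of_pos hc d) (hh.lowerMoment_pos hγ hc)
  have hWP : W < P :=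
    calc W < c ^ d * (c ^ (-d) * P) :=
          mul_lt_mul_of_pos_left (hh.lowerMoment_lt_rpow_mul hγ hγd hd hc) (rpow_pos_of_pos hc d)
      _ = P := by rw [← mul_assoc, ← rpow_add hc, add_neg_cancel, rpow_zero, one_mul]
  have hWP' : W - P < 0 := sub_neg.2 hWP
  have hP : 0 < P := hW.trans hWP
  have hne : W - P ≠ 0 := hWP'.ne
  refine ⟨d * P / (W - P), div_pos_of_neg_of_neg (mul_neg_of_neg_of_pos hd hP) hWP', ?_, ?_⟩
  · rw [show d + d * P / (W - P) = d * W / (W - P) by field_simp; ring]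
    exact div_pos_of_neg_of_neg (mul_neg_of_neg_of_pos hd hW) hWP'
  · field_simp
    ring

theorem modelDefect_nonneg (hh : IsScaleLogConcaveKernel h) {γ κ c d₁ d₂ : ℝ} (hγ : -1 < γ)
    (hc : 0 < c) (hγd₂ : -1 < γ + d₂) (hd₂κ : 0 < d₂ + κ) (hd : d₂ ≤ d₁)
    (h0 : modelDefect h γ κ c d₂ = 0) : 0 ≤ modelDefect h γ κ c d₁ := by
  set Δ : ℝ → ℝ := fun t ↦ lowerMoment h γ t - lowerMoment h γ c * (t / c) ^ κ
  have hweight : ∀ {e t : ℝ}, 0 < t → (0 ≤ t ^ e * Δ t ↔ 0 ≤ Δ t) :=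
    fun ht ↦ mul_nonneg_iff_of_pos_left (rpow_pos_of_pos ht _)
  have hprod : ∀ t ∈ Ioc 0 c, t ^ (d₁ - d₂) * (t ^ (d₂ - 1) * Δ t) = t ^ (d₁ - 1) * Δ t :=
    fun t ht ↦ by rw [← mul_assoc, ← rpow_add ht.1, show d₁ - d₂ + (d₂ - 1) = d₁ - 1 by ring]
  have hint₁ := hh.integrableOn_modelDefect_integrand (d := d₁) (κ := κ) hγ (by linarith)
    (by linarith) hc
  have key := setIntegral_mul_nonneg_of_sign_change (f := fun t ↦ t ^ (d₂ - 1) * Δ t)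
    (g := fun t ↦ t ^ (d₁ - d₂)) hc (by simp [Δ, div_self hc.ne'])
    (fun u hu v hv huv hfu ↦ (hweight hv.1).2 <| sub_nonneg.2 <|
      hh.mul_div_rpow_le_lowerMoment_of_le hγ hu.1 huv hv.2 (sub_nonneg.1 ((hweight hu.1).1 hfu)))
    (fun u hu v _ huv ↦ rpow_le_rpow hu.1 huv (sub_nonneg.2 hd))
    (hh.integrableOn_modelDefect_integrand hγ hγd₂ hd₂κ hc)
    (hint₁.congr_fun (fun t ht ↦ (hprod t ht).symm) measurableSet_Ioc) h0
  rwa [setIntegral_congr_fun measurableSet_Ioc hprod] at key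

theorem lowerMoment_add_le_of_model (hh : IsScaleLogConcaveKernel h) {γ κ c d₁ d₂ : ℝ}
    (hγ : -1 < γ) (hc : 0 < c) (hγd₂ : -1 < γ + d₂) (hd₂ : d₂ < 0) (hd₂κ : 0 < d₂ + κ)
    (hd₁ : 0 ≤ d₁) (hmatch : lowerMoment h (γ + d₂) c * (d₂ + κ) = c ^ d₂ * lowerMoment h γ c * κ) :
    lowerMoment h (γ + d₁) c ≤ c ^ d₁ * lowerMoment h γ c * κ / (d₁ + κ) := by
  have hD₂ : modelDefect h γ κ c d₂ = 0 := by
    rw [hh.lowerMoment_add_eq_sub_modelDefect hγ hγd₂ hd₂κ hc] at hmatch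
    field_simp at hmatch
    have : d₂ * (d₂ + κ) * modelDefect h γ κ c d₂ = 0 := by linear_combination -hmatch
    simpa [hd₂.ne, hd₂κ.ne'] using this
  have hD₁ := hh.modelDefect_nonneg (d₁ := d₁) hγ hc hγd₂ hd₂κ (by linarith) hD₂
  rw [hh.lowerMoment_add_eq_sub_modelDefect (κ := κ) (d := d₁) hγ (by linarith) (by linarith) hc]
  nlinarith [mul_nonneg hd₁ hD₁]

/-- With `m = a x + b y`, replace `J = lowerMoment h m` on `(0, c]` by the power law
`J(c) (t / c) ^ κ`, for which `c ^ γ / lowerMoment h γ c` would be affine in `γ`. Choosing `κ` to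
match at `x`, the single crossing of `J` and the power law (`mul_div_rpow_le_lowerMoment_of_le`)
makes the affine value a lower bound at `y`. -/
theorem convexOn_rpow_div_lowerMoment (hh : IsScaleLogConcaveKernel h) {c : ℝ} (hc : 0 < c) :
    ConvexOn ℝ (Ioi (-1)) (fun γ ↦ c ^ γ / lowerMoment h γ c) := by
  refine LinearOrder.convexOn_of_lt (convex_Ioi _)
    fun x (hx : -1 < x) y (hy : -1 < y) hxy a b ha hb hab ↦ ?_
  simp only [smul_eq_mul]
  have hm : -1 < a * x + b * y := by simpa using convex_Ioi (-1 : ℝ) hx hy ha.le hb.le hab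
  set m := a * x + b * y with hm_def
  clear_value m
  have hd₂ : x - m < 0 := by nlinarith
  have hd₁ : 0 < y - m := by nlinarith
  have hx' : m + (x - m) = x := add_sub_cancel m x
  have hy' : m + (y - m) = y := add_sub_cancel m y
  obtain ⟨κ, hκ, hd₂κ, hκx⟩ := hh.exists_model_exponent hm (by rwa [hx']) hd₂ hc
  have hJy := hh.lowerMoment_add_le_of_model hm hc (by rwa [hx']) hd₂ hd₂κ hd₁.le hκx
  rw [hx'] at hκx
  rw [hy'] at hJy
  set W := lowerMoment h m c with hW_def
  clear_value W
  have hW : 0 < W := hW_def ▸ hh.lowerMoment_pos hm hc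
  have hcx : c ^ x = c ^ m * c ^ (x - m) := by rw [← rpow_add hc, hx']
  have hcy : c ^ y = c ^ m * c ^ (y - m) := by rw [← rpow_add hc, hy']
  have hex : c ^ x / lowerMoment h x c = c ^ m / W * ((x - m + κ) / κ) := by
    rw [hcx, div_eq_iff (hh.lowerMoment_pos hx hc).ne']
    field_simp
    linear_combination -hκx
  have hey : c ^ m / W * ((y - m + κ) / κ) ≤ c ^ y / lowerMoment h y c :=
    calc c ^ m / W * ((y - m + κ) / κ) = c ^ y / (c ^ (y - m) * W * κ / (y - m + κ)) := by
          rw [hcy]; field_simp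
      _ ≤ c ^ y / lowerMoment h y c :=
          div_le_div_of_nonneg_left (rpow_nonneg hc.le _) (hh.lowerMoment_pos hy hc) hJy
  have hsum : a * (x - m + κ) + b * (y - m + κ) = κ := by
    rw [hm_def]; linear_combination (κ - (a * x + b * y)) * hab
  calc c ^ m / W = c ^ m / W / κ * (a * (x - m + κ) + b * (y - m + κ)) := by
        rw [hsum]; field_simp
    _ = a * (c ^ m / W * ((x - m + κ) / κ)) + b * (c ^ m / W * ((y - m + κ) / κ)) := by ring
    _ ≤ a * (c ^ x / lowerMoment h x c) + b * (c ^ y / lowerMoment h y c) := by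
        rw [hex]; gcongr

theorem monotoneOn_log_lowerMoment_combination (hh : IsScaleLogConcaveKernel h) {x y a b : ℝ}
    (hx : -1 < x) (hy : -1 < y) (ha : 0 ≤ a) (hb : 0 ≤ b) (hab : a + b = 1) :
    MonotoneOn (fun c ↦ a * log (lowerMoment h x c) + b * log (lowerMoment h y c) -
      log (lowerMoment h (a * x + b * y) c)) (Ioi 0) := by
  have hm : -1 < a * x + b * y := by simpa using convex_Ioi (-1 : ℝ) hx hy ha hb hab
  have hderiv : ∀ c, 0 < c → HasDerivAt (fun c ↦ a * log (lowerMoment h x c) +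
      b * log (lowerMoment h y c) - log (lowerMoment h (a * x + b * y) c))
      (h c * (a * (c ^ x / lowerMoment h x c) + b * (c ^ y / lowerMoment h y c) -
        c ^ (a * x + b * y) / lowerMoment h (a * x + b * y) c)) c := by
    intro c hc
    have hlog : ∀ {γ}, -1 < γ → HasDerivAt (fun c ↦ log (lowerMoment h γ c))
        (c ^ γ * h c / lowerMoment h γ c) c :=
      fun hγ ↦ (hh.hasDerivAt_lowerMoment hγ hc).log (hh.lowerMoment_pos hγ hc).ne'
    exact ((((hlog hx).const_mul a).add ((hlog hy).const_mul b)).sub (hlog hm)).congr_deriv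
      (by ring)
  refine monotoneOn_of_hasDerivWithinAt_nonneg (convex_Ioi 0)
    (fun c hc ↦ (hderiv c hc).continuousAt.continuousWithinAt)
    (fun c hc ↦ (hderiv c (interior_subset hc)).hasDerivWithinAt) fun c hc ↦ ?_
  have hc : 0 < c := interior_subset hc
  have hconv := (hh.convexOn_rpow_div_lowerMoment hc).2 hx hy ha hb hab
  simp only [smul_eq_mul] at hconv
  exact mul_nonneg (hh.pos hc).le (by linarith)

theorem concaveOn_log_lowerMoment_div_moment (hh : IsScaleLogConcaveKernel h) {s : ℝ}
    (hs : 0 < s) : ConcaveOn ℝ (Ioi (-1)) (fun γ ↦ log (lowerMoment h γ s / moment h γ)) := by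
  refine ⟨convex_Ioi _, fun x (hx : -1 < x) y (hy : -1 < y) a b ha hb hab ↦ ?_⟩
  simp only [smul_eq_mul]
  have hm : -1 < a * x + b * y := by simpa using convex_Ioi (-1 : ℝ) hx hy ha hb hab
  have hlim : ∀ {γ}, -1 < γ →
      Tendsto (fun c ↦ log (lowerMoment h γ c)) atTop (𝓝 (log (moment h γ))) :=
    fun hγ ↦ (hh.tendsto_lowerMoment_atTop hγ).log (hh.moment_pos hγ).ne'
  have hle := ge_of_tendsto ((((hlim hx).const_mul a).add ((hlim hy).const_mul b)).sub (hlim hm))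
    ((eventually_ge_atTop s).mono fun c hc ↦
      hh.monotoneOn_log_lowerMoment_combination hx hy ha hb hab hs (hs.trans_le hc) hc)
  have hlog_div : ∀ {γ}, -1 < γ →
      log (lowerMoment h γ s / moment h γ) = log (lowerMoment h γ s) - log (moment h γ) :=
    fun hγ ↦ log_div (hh.lowerMoment_pos hγ hs).ne' (hh.moment_pos hγ).ne'
  rw [hlog_div hx, hlog_div hy, hlog_div hm]
  linarith

end IsScaleLogConcaveKernel

namespace Real

theorem Gamma_mul_Gamma_le {p q r w : ℝ} (hp : 0 < p) (hmono : MonotoneOn Gamma (Ici p))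
    (hpq : p ≤ q) (hpr : p ≤ r) (hw : q + r ≤ p + w) :
    Gamma q * Gamma r ≤ Gamma p * Gamma w := by
  have hpos : ∀ {y}, p ≤ y → 0 < Gamma y := fun hy ↦ Gamma_pos_of_pos (hp.trans_le hy)
  have hlog : Gamma q * Gamma r ≤ Gamma p * Gamma (q + r - p) := by
    have hm : p ≤ q + r - p := by linarith
    rw [← log_le_log_iff (mul_pos (hpos hpq) (hpos hpr)) (mul_pos (hpos le_rfl) (hpos hm)),
      log_mul (hpos hpq).ne' (hpos hpr).ne', log_mul (hpos le_rfl).ne' (hpos hm).ne']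
    exact convexOn_log_Gamma.add_le_add_sub hp (show (0 : ℝ) < q + r - p by linarith) hpq hpr
  exact hlog.trans (mul_le_mul_of_nonneg_left (hmono (mem_Ici.2 (by linarith))
    (mem_Ici.2 (by linarith)) (by linarith)) (hpos le_rfl).le)

end Real

noncomputable def volterraKernel (x α t : ℝ) : ℝ := x ^ (t + α) / Gamma (t + α + 1)

theorem volterraKernel_le {x α t : ℝ} (hx0 : 0 < x) (hα : 0 < α + 1)
    (hmono : MonotoneOn Gamma (Ici (α + 1))) (ht : 0 ≤ t) :
    volterraKernel x α t ≤ x ^ α / Gamma (α + 1) * x ^ t := by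
  rw [volterraKernel, div_mul_eq_mul_div, ← rpow_add hx0, add_comm α]
  exact div_le_div_of_nonneg_left (rpow_nonneg hx0.le _) (Gamma_pos_of_pos hα)
    (hmono self_mem_Ici (by simp [ht]) (by linarith))

theorem continuousOn_volterraKernel {x α : ℝ} (hx0 : 0 < x) (hα : 0 < α + 1) :
    ContinuousOn (volterraKernel x α) (Ioi 0) := by
  have hpos : ∀ t ∈ Ioi (0 : ℝ), 0 < t + α + 1 := fun t (ht : 0 < t) ↦ by linarith
  exact (continuous_const.rpow (by fun_prop) fun _ ↦ Or.inl hx0.ne').continuousOn.div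
    (differentiableOn_Gamma_Ioi.continuousOn.comp (by fun_prop) hpos)
    fun t ht ↦ (Gamma_pos_of_pos (hpos t ht)).ne'

theorem isScaleLogConcaveKernel_volterraKernel {x α : ℝ} (hx0 : 0 < x) (hx1 : x < 1)
    (hα : 0 < α + 1) (hmono : MonotoneOn Gamma (Ici (α + 1))) :
    IsScaleLogConcaveKernel (volterraKernel x α) where
  pos t ht := div_pos (rpow_pos_of_pos hx0 _) (Gamma_pos_of_pos (by linarith))
  continuousOn := continuousOn_volterraKernel hx0 hα
  bddAbove := ⟨x ^ α / Gamma (α + 1), by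
    rintro _ ⟨t, ht, rfl⟩
    exact (volterraKernel_le hx0 hα hmono (le_of_lt ht)).trans (mul_le_of_le_one_right
      (div_nonneg (rpow_nonneg hx0.le _) (Gamma_pos_of_pos hα).le)
      (rpow_le_one hx0.le hx1.le (le_of_lt ht)))⟩
  integrableOn γ hγ := by
    have hb : 0 < -log x := neg_pos.2 (log_neg hx0 hx1)
    have hdom := (integrableOn_rpow_mul_exp_neg_mul_rpow hγ zero_lt_one hb).const_mul
      (x ^ α / Gamma (α + 1))
    refine Integrable.mono' hdom (ContinuousOn.aestronglyMeasurable (fun t (ht : 0 < t) ↦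
      ((continuousAt_rpow_const t γ (Or.inl ht.ne')).continuousWithinAt.mul
        (continuousOn_volterraKernel hx0 hα t ht))) measurableSet_Ioi)
      ((ae_restrict_iff' measurableSet_Ioi).2 (ae_of_all _ fun t (ht : 0 < t) ↦ ?_))
    have hK : 0 ≤ volterraKernel x α t :=
      div_nonneg (rpow_nonneg hx0.le _) (Gamma_pos_of_pos (by linarith)).le
    rw [norm_of_nonneg (mul_nonneg (rpow_nonneg ht.le γ) hK), rpow_one, neg_mul, neg_mul, neg_neg,
      ← rpow_def_of_pos hx0, mul_left_comm]
    exact mul_le_mul_of_nonneg_left (volterraKernel_le hx0 hα hmono ht.le) (rpow_nonneg ht.le γ)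
  mul_le_mul_scale u r r' hu hu1 hr hrr' := by
    have hur : 0 ≤ u * r := mul_nonneg hu.le hr.le
    have hurr' : u * r ≤ u * r' := mul_le_mul_of_nonneg_left hrr' hu.le
    have hcross : u * r' + r ≤ u * r + r' := by
      nlinarith [mul_le_mul_of_nonneg_right hu1 (sub_nonneg.2 hrr')]
    simp only [volterraKernel]
    rw [div_mul_div_comm, div_mul_div_comm, ← rpow_add hx0, ← rpow_add hx0]
    refine div_le_div₀ (rpow_nonneg hx0.le _)
      (rpow_le_rpow_of_exponent_ge hx0 hx1.le (by linarith))
      (mul_pos (Gamma_pos_of_pos (by linarith)) (Gamma_pos_of_pos (by linarith)))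
      (Gamma_mul_Gamma_le (by linarith) (hmono.mono (Ici_subset_Ici.2 (by linarith)))
        (by linarith) ?_ (by linarith))
    linarith [mul_le_mul_of_nonneg_right hu1 hr.le]

theorem volterraGStar_eq_lowerMoment_div_moment {β : ℝ} (hβ : -1 < β) (x α s : ℝ) :
    volterraGStar β x α s =
      lowerMoment (volterraKernel x α) β s / moment (volterraKernel x α) β := by
  have hΓ : Gamma (β + 1) ≠ 0 := (Gamma_pos_of_pos (by linarith)).ne'
  have hintegrand : (fun t ↦ x ^ (t + α) * t ^ β / (Gamma (t + α + 1) * Gamma (β + 1))) =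
      fun t ↦ t ^ β * volterraKernel x α t / Gamma (β + 1) := by
    ext t
    rw [volterraKernel]
    ring
  rw [volterraGStar, volterraMuIncStar, volterraMu, hintegrand, integral_div, integral_div,
    div_div_div_cancel_right₀ hΓ, lowerMoment, moment]

/-- For `0 < x < 1`, `s > 0` and `α > z*` (`z*` the abscissa of the minimum of the
gamma function on `(0, ∞)`), the function `β ↦ G*_β(x, α, s)` is log-concave on
`(-1, ∞)`. -/
theorem volterraGStar_logConcave_in_beta (x α s zstar : ℝ)
    (hx0 : 0 < x) (hx1 : x < 1) (hs : 0 < s)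
    (hzstar : zstar ∈ Set.Ioi (0 : ℝ))
    (hmin : ∀ y ∈ Set.Ioi (0 : ℝ), Real.Gamma zstar ≤ Real.Gamma y)
    (hα : zstar < α) :
    ∀ β₁ β₂ : ℝ, -1 < β₁ → -1 < β₂ → ∀ l : ℝ, l ∈ Set.Icc (0 : ℝ) 1 →
      volterraGStar β₁ x α s ^ l * volterraGStar β₂ x α s ^ (1 - l) ≤
        volterraGStar (l * β₁ + (1 - l) * β₂) x α s := by
  intro β₁ β₂ hβ₁ hβ₂ l ⟨hl0, hl1⟩
  have hα1 : 0 < α + 1 := by linarith [mem_Ioi.1 hzstar]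
  have hmono : MonotoneOn Gamma (Ici (α + 1)) :=
    (convexOn_Gamma.monotoneOn_of_isMinOn hzstar (isMinOn_iff.2 hmin)).mono
      fun y (hy : α + 1 ≤ y) ↦ ⟨hα1.trans_le hy, by simp only [mem_Ici]; linarith⟩
  have hK := isScaleLogConcaveKernel_volterraKernel hx0 hx1 hα1 hmono
  have hβ : -1 < l * β₁ + (1 - l) * β₂ := by
    simpa using convex_Ioi (-1 : ℝ) hβ₁ hβ₂ hl0 (sub_nonneg.2 hl1) (by ring)
  have hconc := (hK.concaveOn_log_lowerMoment_div_moment hs).2 hβ₁ hβ₂ hl0 (sub_nonneg.2 hl1)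
    (by ring)
  simp only [smul_eq_mul] at hconc
  rw [volterraGStar_eq_lowerMoment_div_moment hβ₁, volterraGStar_eq_lowerMoment_div_moment hβ₂,
    volterraGStar_eq_lowerMoment_div_moment hβ]
  exact rpow_mul_rpow_le_of_log_le (hK.lowerMoment_div_moment_pos hβ₁ hs)
    (hK.lowerMoment_div_moment_pos hβ₂ hs) (hK.lowerMoment_div_moment_pos hβ hs) hconc
end

section
/- Let α > -1, x > 0 and s > 0. Then the function β ↦ G*_β(x, α, s) is decreasing on (-1, ∞): for all -1 < β₁ ≤ β₂ one has G*_{β₂}(x, α, s) ≤ G*_{β₁}(x, α, s). Consequently, for β₁, β₂ > -1 and λ ∈ [0, 1], G*_{λβ₁+(1-λ)β₂}(x, α, s) ≤ max(G*_{β₁}(x, α, s), G*_{β₂}(x, α, s)). -/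
open MeasureTheory Real Set

/-!
With the weight `w(t) = x^(t+α) / Γ(t+α+1)` one has `G*_β = A_β / (A_β + B_β)`, where
`A_β = ∫₀^s w(t) t^β dt` and `B_β = ∫_s^∞ w(t) t^β dt` (the factor `1/Γ(β+1)` cancels).
Passing from `β₁` to `β₂ ≥ β₁` multiplies the integrand by `t^(β₂-β₁)`, which is at most
`s^(β₂-β₁)` on `(0, s]` and at least `s^(β₂-β₁)` on `(s, ∞)`; hence `A₂ B₁ ≤ A₁ B₂`, which is
`G*_{β₂} ≤ G*_{β₁}`. An antitone function on an interval is quasiconvex, which gives the bound by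
the maximum. The integrals converge because `Γ(y) ≥ e^{-R} R^{y-1}` makes `w` decay exponentially.
-/

theorem Real.exp_neg_mul_rpow_le_Gamma {y R : ℝ} (hy : 1 ≤ y) (hR : 0 ≤ R) :
    exp (-R) * R ^ (y - 1) ≤ Gamma y := by
  have hint : IntegrableOn (fun u ↦ exp (-u) * u ^ (y - 1)) (Ioi 0) :=
    GammaIntegral_convergent (by linarith)
  calc exp (-R) * R ^ (y - 1) = ∫ u in Ioi R, exp (-u) * R ^ (y - 1) := by
        rw [integral_mul_const, integral_exp_neg_Ioi]
    _ ≤ ∫ u in Ioi R, exp (-u) * u ^ (y - 1) := by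
        refine setIntegral_mono_on ((integrableOn_exp_neg_Ioi R).mul_const _)
          (hint.mono_set (Ioi_subset_Ioi hR)) measurableSet_Ioi fun u hu ↦ ?_
        gcongr
        exact le_of_lt hu
    _ ≤ ∫ u in Ioi 0, exp (-u) * u ^ (y - 1) :=
        setIntegral_mono_set hint
          (ae_restrict_of_forall_mem measurableSet_Ioi fun u hu ↦
            mul_nonneg (exp_nonneg _) (rpow_nonneg (le_of_lt hu) _))
          (Ioi_subset_Ioi hR).eventuallyLE
    _ = Gamma y := (Gamma_eq_integral (by linarith)).symm

noncomputable def volterraWeight (x α t : ℝ) : ℝ :=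
  x ^ (t + α) / Gamma (t + α + 1)

section VolterraWeight

variable {x α t : ℝ}

theorem continuousAt_volterraWeight (hx : x ≠ 0) (ht : 0 < t + α + 1) :
    ContinuousAt (volterraWeight x α) t := by
  have hΓ : ContinuousAt (fun u ↦ Gamma (u + α + 1)) t :=
    ((differentiableAt_Gamma fun m ↦ by linarith [(m.cast_nonneg : (0 : ℝ) ≤ m)]).continuousAt
      ).comp (f := fun u ↦ u + α + 1) (by fun_prop)
  exact ((continuousAt_const_rpow hx).comp (f := fun u ↦ u + α) (by fun_prop)).div hΓ
    (Gamma_pos_of_pos ht).ne'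

theorem volterraWeight_pos (hx : 0 < x) (ht : 0 < t + α + 1) : 0 < volterraWeight x α t :=
  div_pos (rpow_pos_of_pos hx _) (Gamma_pos_of_pos ht)

/-- Taking `R = e x` in `exp (-R) * R ^ (y - 1) ≤ Γ y` makes `x / R = e⁻¹`. -/
theorem volterraWeight_le_exp (hx : 0 < x) (ht : 0 ≤ t + α) :
    volterraWeight x α t ≤ exp (exp 1 * x) * exp (-(t + α)) := by
  have hΓ := exp_neg_mul_rpow_le_Gamma (y := t + α + 1) (R := exp 1 * x) (by linarith)
    (by positivity)
  rw [add_sub_cancel_right] at hΓ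
  have hpow : exp (-(t + α)) * (exp 1 * x) ^ (t + α) = x ^ (t + α) := by
    rw [mul_rpow (exp_pos 1).le hx.le, ← exp_mul, one_mul, ← mul_assoc, ← exp_add,
      neg_add_cancel, exp_zero, one_mul]
  rw [volterraWeight, div_le_iff₀ (Gamma_pos_of_pos (by linarith)), ← hpow]
  calc exp (-(t + α)) * (exp 1 * x) ^ (t + α)
      = exp (exp 1 * x) * exp (-(t + α)) * (exp (-(exp 1 * x)) * (exp 1 * x) ^ (t + α)) := by
        rw [exp_neg (exp 1 * x)]; field_simp
    _ ≤ exp (exp 1 * x) * exp (-(t + α)) * Gamma (t + α + 1) := by gcongr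

end VolterraWeight

theorem integrableOn_volterraWeight_mul_rpow {x α β : ℝ} (hx : 0 < x) (hα : -1 < α)
    (hβ : -1 < β) : IntegrableOn (fun t ↦ volterraWeight x α t * t ^ β) (Ioi 0) := by
  have hcont : ContinuousOn (volterraWeight x α) (Ici 0) := continuousOn_of_forall_continuousAt
    fun t (ht : 0 ≤ t) ↦ continuousAt_volterraWeight hx.ne' (by linarith)
  rw [← Ioc_union_Ioi_eq_Ioi zero_le_one]
  refine IntegrableOn.union ?_ ?_
  · have hrpow : IntegrableOn (fun t : ℝ ↦ t ^ β) (Icc 0 1) := by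
      rw [integrableOn_Icc_iff_integrableOn_Ioc' (by simp),
        ← intervalIntegrable_iff_integrableOn_Ioc_of_le zero_le_one]
      exact intervalIntegral.intervalIntegrable_rpow' hβ
    exact (hrpow.continuousOn_mul (hcont.mono Icc_subset_Ici_self) isCompact_Icc).mono_set
      Ioc_subset_Icc_self
  · have hdom : IntegrableOn (fun t ↦ exp (exp 1 * x) * exp (-α) * (exp (-t) * t ^ (β + 1 - 1)))
        (Ioi 1) :=
      ((GammaIntegral_convergent (by linarith)).mono_set (Ioi_subset_Ioi zero_le_one)).const_mul _
    have hmeas : ContinuousOn (fun t ↦ volterraWeight x α t * t ^ β) (Ioi 1) :=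
      (hcont.mono (Ioi_subset_Ici zero_le_one)).mul
        (continuousOn_id.rpow_const fun t (ht : 1 < t) ↦ Or.inl (zero_lt_one.trans ht).ne')
    refine hdom.mono' (hmeas.aestronglyMeasurable measurableSet_Ioi)
      (ae_restrict_of_forall_mem measurableSet_Ioi fun t (ht : 1 < t) ↦ ?_)
    have hw := volterraWeight_le_exp hx (by linarith : 0 ≤ t + α)
    rw [norm_of_nonneg (mul_nonneg (volterraWeight_pos hx (by linarith)).le
      (rpow_nonneg (by linarith) _)), add_sub_cancel_right]
    calc volterraWeight x α t * t ^ β ≤ exp (exp 1 * x) * exp (-(t + α)) * t ^ β := by gcongr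
      _ = _ := by rw [neg_add, exp_add]; ring

theorem div_add_le_div_add_of_mul_le_mul {K : Type*} [Field K] [LinearOrder K]
    [IsStrictOrderedRing K] {a₁ b₁ a₂ b₂ : K} (h₁ : 0 < a₁ + b₁) (h₂ : 0 < a₂ + b₂)
    (h : a₂ * b₁ ≤ a₁ * b₂) : a₂ / (a₂ + b₂) ≤ a₁ / (a₁ + b₁) := by
  rw [div_le_div_iff₀ h₂ h₁]
  linarith

theorem setIntegral_mul_setIntegral_le_of_le_mul_of_mul_le {X : Type*} [MeasurableSpace X]
    {μ : Measure X} {S T : Set X} {f g : X → ℝ} {k : ℝ} (hS : MeasurableSet S)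
    (hT : MeasurableSet T) (hfS : IntegrableOn f S μ) (hgS : IntegrableOn g S μ)
    (hfT : IntegrableOn f T μ) (hgT : IntegrableOn g T μ) (hf₀S : ∀ x ∈ S, 0 ≤ f x)
    (hf₀T : ∀ x ∈ T, 0 ≤ f x) (hgS_le : ∀ x ∈ S, g x ≤ k * f x)
    (hgT_ge : ∀ x ∈ T, k * f x ≤ g x) :
    (∫ x in S, g x ∂μ) * ∫ x in T, f x ∂μ ≤ (∫ x in S, f x ∂μ) * ∫ x in T, g x ∂μ :=
  calc (∫ x in S, g x ∂μ) * ∫ x in T, f x ∂μ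
      ≤ (∫ x in S, k * f x ∂μ) * ∫ x in T, f x ∂μ :=
        mul_le_mul_of_nonneg_right (setIntegral_mono_on hgS (hfS.const_mul k) hS hgS_le)
          (setIntegral_nonneg hT hf₀T)
    _ = (∫ x in S, f x ∂μ) * ∫ x in T, k * f x ∂μ := by simp only [integral_const_mul]; ring
    _ ≤ (∫ x in S, f x ∂μ) * ∫ x in T, g x ∂μ :=
        mul_le_mul_of_nonneg_left (setIntegral_mono_on (hfT.const_mul k) hgT hT hgT_ge)
          (setIntegral_nonneg hS hf₀S)

section VolterraGStar

variable {x α β s : ℝ}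

theorem volterraGStar_eq_div (hx : 0 < x) (hα : -1 < α) (hβ : -1 < β) (hs : 0 ≤ s) :
    volterraGStar β x α s =
      (∫ t in Ioc 0 s, volterraWeight x α t * t ^ β) /
        ((∫ t in Ioc 0 s, volterraWeight x α t * t ^ β) +
          ∫ t in Ioi s, volterraWeight x α t * t ^ β) := by
  have hint := integrableOn_volterraWeight_mul_rpow hx hα hβ
  have hintegrand : ∀ t, x ^ (t + α) * t ^ β / (Gamma (t + α + 1) * Gamma (β + 1)) =
      volterraWeight x α t * t ^ β / Gamma (β + 1) := fun t ↦ by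
    rw [volterraWeight]; ring
  rw [volterraGStar, volterraMuIncStar, volterraMu]
  simp_rw [hintegrand, integral_div]
  rw [← Ioc_union_Ioi_eq_Ioi hs, setIntegral_union (Ioc_disjoint_Ioi le_rfl) measurableSet_Ioi
    (hint.mono_set Ioc_subset_Ioi_self) (hint.mono_set (Ioi_subset_Ioi hs)),
    div_div_div_cancel_right₀ (Gamma_pos_of_pos (by linarith)).ne']

theorem setIntegral_Ioc_volterraWeight_mul_rpow_pos (hx : 0 < x) (hα : -1 < α) (hβ : -1 < β)
    (hs : 0 < s) : 0 < ∫ t in Ioc 0 s, volterraWeight x α t * t ^ β := by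
  rw [← intervalIntegral.integral_of_le hs.le]
  refine intervalIntegral.intervalIntegral_pos_of_pos_on ?_ (fun t ht ↦ ?_) hs
  · rw [intervalIntegrable_iff_integrableOn_Ioc_of_le hs.le]
    exact (integrableOn_volterraWeight_mul_rpow hx hα hβ).mono_set Ioc_subset_Ioi_self
  · exact mul_pos (volterraWeight_pos hx (by linarith [ht.1])) (rpow_pos_of_pos ht.1 _)

theorem volterraGStar_antitoneOn (hx : 0 < x) (hα : -1 < α) (hs : 0 < s) :
    AntitoneOn (fun β ↦ volterraGStar β x α s) (Ioi (-1)) := by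
  intro β₁ (hβ₁ : -1 < β₁) β₂ (hβ₂ : -1 < β₂) hle
  have hint₁ := integrableOn_volterraWeight_mul_rpow hx hα hβ₁
  have hint₂ := integrableOn_volterraWeight_mul_rpow hx hα hβ₂
  have hnonneg : ∀ β : ℝ, ∀ t ∈ Ioi 0, 0 ≤ volterraWeight x α t * t ^ β := fun β t (ht : 0 < t) ↦
    mul_nonneg (volterraWeight_pos hx (by linarith)).le (rpow_nonneg ht.le _)
  have hden : ∀ β : ℝ, -1 < β → 0 < (∫ t in Ioc 0 s, volterraWeight x α t * t ^ β) +
      ∫ t in Ioi s, volterraWeight x α t * t ^ β := fun β hβ ↦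
    add_pos_of_pos_of_nonneg (setIntegral_Ioc_volterraWeight_mul_rpow_pos hx hα hβ hs)
      (setIntegral_nonneg measurableSet_Ioi fun t (ht : s < t) ↦ hnonneg β t (hs.trans ht))
  have hsplit : ∀ t ∈ Ioi 0, volterraWeight x α t * t ^ β₂ =
      t ^ (β₂ - β₁) * (volterraWeight x α t * t ^ β₁) := fun t (ht : 0 < t) ↦ by
    rw [mul_left_comm, ← rpow_add ht, sub_add_cancel]
  have hδ : 0 ≤ β₂ - β₁ := sub_nonneg.2 hle
  dsimp only
  rw [volterraGStar_eq_div hx hα hβ₁ hs.le, volterraGStar_eq_div hx hα hβ₂ hs.le]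
  refine div_add_le_div_add_of_mul_le_mul (hden β₁ hβ₁) (hden β₂ hβ₂)
    (setIntegral_mul_setIntegral_le_of_le_mul_of_mul_le (k := s ^ (β₂ - β₁))
      measurableSet_Ioc measurableSet_Ioi (hint₁.mono_set Ioc_subset_Ioi_self)
      (hint₂.mono_set Ioc_subset_Ioi_self) (hint₁.mono_set (Ioi_subset_Ioi hs.le))
      (hint₂.mono_set (Ioi_subset_Ioi hs.le)) (fun t ht ↦ hnonneg β₁ t ht.1)
      (fun t (ht : s < t) ↦ hnonneg β₁ t (hs.trans ht)) (fun t ht ↦ ?_) (fun t ht ↦ ?_))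
  · rw [hsplit t ht.1]
    exact mul_le_mul_of_nonneg_right (rpow_le_rpow ht.1.le ht.2 hδ) (hnonneg β₁ t ht.1)
  · rw [hsplit t (hs.trans ht)]
    exact mul_le_mul_of_nonneg_right (rpow_le_rpow hs.le (le_of_lt ht) hδ)
      (hnonneg β₁ t (hs.trans ht))

end VolterraGStar

/-- For `α > -1`, `x > 0`, `s > 0`, the function `β ↦ G*_β(x, α, s)` is decreasing on
`(-1, ∞)`; consequently `G*` at a convex combination is bounded by the max. -/
theorem volterraGStar_decreasing_in_beta (x α s : ℝ)
    (hx : 0 < x) (hα : -1 < α) (hs : 0 < s) :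
    (∀ β₁ β₂ : ℝ, -1 < β₁ → β₁ ≤ β₂ →
      volterraGStar β₂ x α s ≤ volterraGStar β₁ x α s) ∧
    (∀ β₁ β₂ : ℝ, -1 < β₁ → -1 < β₂ → ∀ l : ℝ, l ∈ Set.Icc (0 : ℝ) 1 →
      volterraGStar (l * β₁ + (1 - l) * β₂) x α s ≤
        max (volterraGStar β₁ x α s) (volterraGStar β₂ x α s)) := by
  have hanti := volterraGStar_antitoneOn hx hα hs
  have hquasi := (quasiconvexOn_iff_le_max.1 (hanti.quasiconvexOn (convex_Ioi (𝕜 := ℝ) (-1 : ℝ)))).2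
  refine ⟨fun β₁ β₂ hβ₁ hle ↦ hanti hβ₁ (hβ₁.trans_le hle) hle, ?_⟩
  rintro β₁ β₂ hβ₁ hβ₂ l ⟨hl₀, hl₁⟩
  simpa only [smul_eq_mul] using hquasi hβ₁ hβ₂ hl₀ (sub_nonneg.2 hl₁) (add_sub_cancel l 1)
end
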